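/- If !F ~ α.F' | Q, then !F ~ !F | α.F'. Here, for a finite process F = α1.F1 | ... | αk.Fk, !F denotes the process !α1.F1 | ... | !αk.Fk. -/
import Mathlib


namespace CCS

/-- Process terms over a set of actions `A`. -/
inductive Proc (A : Type) where
  | nil : Proc A
  | pre : A → Proc A → Proc A
  | par : Proc A → Proc A → Proc A
  | repl : A → Proc A → Proc A

namespace Proc

/-- Finite processes: no occurrence of replication. -/
def IsFin {A : Type} : Proc A → Prop
  | nil => True
  | pre _ p => IsFin p
  | par p q => IsFin p ∧ IsFin q
  | repl _ _ => False

/-- Processes of the calculus: replication is applied only to prefixed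
finite processes, at top level. -/
def Wf {A : Type} : Proc A → Prop
  | nil => True
  | pre _ p => IsFin p
  | par p q => Wf p ∧ Wf q
  | repl _ p => IsFin p

/-- Size: the number of prefixes. -/
def size {A : Type} : Proc A → ℕ
  | nil => 0
  | pre _ p => size p + 1
  | par p q => size p + size q
  | repl _ p => size p + 1

/-- `reps n p` is the parallel composition of `n` copies of `p`. -/
def reps {A : Type} : ℕ → Proc A → Proc A
  | 0, _ => nil
  | n+1, p => par p (reps n p)

/-- `bang F` is `!F`: for `F = α₁.F₁ | ... | αk.Fk` it is `!α₁.F₁ | ... | !αk.Fk`. -/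
def bang {A : Type} : Proc A → Proc A
  | nil => nil
  | pre a p => repl a p
  | par p q => par (bang p) (bang q)
  | repl a p => repl a p

end Proc

/-- The labelled transition system (no synchronisation). -/
inductive Step {A : Type} : Proc A → A → Proc A → Prop where
  | pre {a : A} {p : Proc A} : Step (Proc.pre a p) a p
  | repl {a : A} {p : Proc A} :
      Step (Proc.repl a p) a (Proc.par (Proc.repl a p) p)
  | parL {p : Proc A} {a : A} {p' : Proc A} (q : Proc A) :
      Step p a p' → Step (Proc.par p q) a (Proc.par p' q)
  | parR {q : Proc A} {a : A} {q' : Proc A} (p : Proc A) :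
      Step q a q' → Step (Proc.par p q) a (Proc.par p q')

/-- Strong bisimulations. -/
def IsBisim {A : Type} (R : Proc A → Proc A → Prop) : Prop :=
  Symmetric R ∧
    ∀ p q, R p q → ∀ a p', Step p a p' → ∃ q', Step q a q' ∧ R p' q'

/-- Strong bisimilarity `~`: the greatest strong bisimulation. -/
def Bisim {A : Type} (p q : Proc A) : Prop :=
  ∃ R, IsBisim R ∧ R p q

/-- The congruence `≡D`: the smallest congruence generated by the abelian
monoid laws for parallel composition (neutral element `0`) and the
distribution law `α.(F | α.F | ... | α.F) = α.F | α.F | ... | α.F`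
(with as many occurrences of `F` on both sides). -/
inductive EqD {A : Type} : Proc A → Proc A → Prop where
  | refl (p : Proc A) : EqD p p
  | symm {p q : Proc A} : EqD p q → EqD q p
  | trans {p q r : Proc A} : EqD p q → EqD q r → EqD p r
  | parComm (p q : Proc A) : EqD (Proc.par p q) (Proc.par q p)
  | parAssoc (p q r : Proc A) :
      EqD (Proc.par (Proc.par p q) r) (Proc.par p (Proc.par q r))
  | parNil (p : Proc A) : EqD (Proc.par p Proc.nil) p
  | distr (a : A) (F : Proc A) (n : ℕ) (hF : F.IsFin) :
      EqD (Proc.pre a (Proc.par F (Proc.reps n (Proc.pre a F))))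
          (Proc.reps (n + 1) (Proc.pre a F))
  | congPre (a : A) {p q : Proc A} : EqD p q → EqD (Proc.pre a p) (Proc.pre a q)
  | congPar {p p' q q' : Proc A} :
      EqD p p' → EqD q q' → EqD (Proc.par p q) (Proc.par p' q')
  | congRepl (a : A) {p q : Proc A} : EqD p q → EqD (Proc.repl a p) (Proc.repl a q)

/-- Finite (single-hole) contexts `D ::= [] | α.D | D|F`. -/
inductive FCtx (A : Type) where
  | hole : FCtx A
  | pre : A → FCtx A → FCtx A
  | par : FCtx A → Proc A → FCtx A

/-- Filling the hole of a finite context. -/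
def FCtx.fill {A : Type} : FCtx A → Proc A → Proc A
  | .hole, p => p
  | .pre a d, p => Proc.pre a (d.fill p)
  | .par d f, p => Proc.par (d.fill p) f

/-- Well-formedness of a finite context: the processes placed in parallel
are finite. -/
def FCtx.Wf {A : Type} : FCtx A → Prop
  | .hole => True
  | .pre _ d => d.Wf
  | .par d f => d.Wf ∧ f.IsFin

/-- Single-hole contexts `C ::= D | !α.D | C|P` (the hole never occurs
directly under a replication). -/
inductive Ctx (A : Type) where
  | ofD : FCtx A → Ctx A
  | repl : A → FCtx A → Ctx A
  | par : Ctx A → Proc A → Ctx A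

/-- Filling the hole of a context. -/
def Ctx.fill {A : Type} : Ctx A → Proc A → Proc A
  | .ofD d, p => d.fill p
  | .repl a d, p => Proc.repl a (d.fill p)
  | .par c q, p => Proc.par (c.fill p) q

/-- Well-formedness of a context. -/
def Ctx.Wf {A : Type} : Ctx A → Prop
  | .ofD d => d.Wf
  | .repl _ d => d.Wf
  | .par c p => c.Wf ∧ p.Wf

/-- `k` consecutive transitions. -/
inductive NSteps {A : Type} : Proc A → ℕ → Proc A → Prop where
  | zero (p : Proc A) : NSteps p 0 p
  | succ {p : Proc A} {a : A} {p' : Proc A} {k : ℕ} {q : Proc A} :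
      Step p a p' → NSteps p' k q → NSteps p (k + 1) q

/-- `P ⇒k Q`: `k` transitions from `P` reach a process `≡D Q`. -/
def Reduct {A : Type} (p : Proc A) (k : ℕ) (q : Proc A) : Prop :=
  ∃ p', NSteps p k p' ∧ EqD p' q

/-- `TopRepl S a G` holds when `!a.G` is one of the (top-level) replicated
parallel components of `S`. -/
inductive TopRepl {A : Type} : Proc A → A → Proc A → Prop where
  | repl (a : A) (p : Proc A) : TopRepl (Proc.repl a p) a p
  | parL {p : Proc A} {a : A} {r : Proc A} (q : Proc A) :
      TopRepl p a r → TopRepl (Proc.par p q) a r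
  | parR {q : Proc A} {a : A} {r : Proc A} (p : Proc A) :
      TopRepl q a r → TopRepl (Proc.par p q) a r

/-- `S` has only replicated components: `S = ∏i !αi.Si`. -/
def ReplOnly {A : Type} : Proc A → Prop
  | .nil => True
  | .pre _ _ => False
  | .par p q => ReplOnly p ∧ ReplOnly q
  | .repl _ p => p.IsFin

/-- `S ⫫ F` : for no component `!αi.Si` of `S` and no `k` do we have
`F ⇒k αi.Si`. -/
def Dis {A : Type} (S F : Proc A) : Prop :=
  ∀ a G, TopRepl S a G → ∀ k, ¬ Reduct F k (Proc.pre a G)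

/-- `S ▷ R` : there is `k > 0` with `S ⇒k S | R`. -/
def Purg {A : Type} (S R : Proc A) : Prop :=
  ∃ k, 0 < k ∧ Reduct S k (Proc.par S R)

/-- A process is a seed if no (well-formed) process of strictly smaller
size is bisimilar to it. -/
def IsSeed {A : Type} (p : Proc A) : Prop :=
  p.Wf ∧ ∀ q : Proc A, q.Wf → Bisim q p → p.size ≤ q.size

/-- The rewriting relation `⤳_T` (first argument), defined modulo `≡D` by
the axioms (B1) `C[α.F] ⤳_{!α.F|F'} C[0]` and (B2) `!α.F | !α.F | P ⤳_Q !α.F | P`. -/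
inductive Rw {A : Type} : Proc A → Proc A → Proc A → Prop where
  | B1 {a : A} {F F' : Proc A} (C : Ctx A) :
      F.IsFin → F'.Wf → C.Wf →
      Rw (Proc.par (Proc.repl a F) F') (C.fill (Proc.pre a F)) (C.fill Proc.nil)
  | B2 {a : A} {F P Q : Proc A} :
      F.IsFin → P.Wf → Q.Wf →
      Rw Q (Proc.par (Proc.repl a F) (Proc.par (Proc.repl a F) P))
           (Proc.par (Proc.repl a F) P)
  | eqD {T T' P P' Q Q' : Proc A} :
      EqD T T' → EqD P P' → Rw T' P' Q' → EqD Q Q' → Rw T P Q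

/-- `⤳*_T` : the reflexive transitive closure of `⤳_T`. -/
def RwStar {A : Type} (T : Proc A) : Proc A → Proc A → Prop :=
  Relation.ReflTransGen (Rw T)

/-- Convertibility `P ⋈ Q`: some process `T` satisfies `P ⤳*_T T` and `Q ⤳*_T T`. -/
def Convert {A : Type} (P Q : Proc A) : Prop :=
  ∃ T : Proc A, T.Wf ∧ RwStar T P T ∧ RwStar T Q T

/-- `∏i αi.Fi` for a list of prefixed components. -/
def prodPre {A : Type} (l : List (A × Proc A)) : Proc A :=
  (l.map fun x => Proc.pre x.1 x.2).foldr Proc.par Proc.nil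

/-- `∏i !αi.Fi` for a list of prefixed components. -/
def bangProd {A : Type} (l : List (A × Proc A)) : Proc A :=
  (l.map fun x => Proc.repl x.1 x.2).foldr Proc.par Proc.nil


/-! ### Auxiliary development -/

section Aux

variable {A : Type}

open Proc

theorem bisim_refl (p : Proc A) : Bisim p p :=
  ⟨Eq, ⟨fun _ _ h => h.symm, by rintro p q rfl a p' h; exact ⟨p', h, rfl⟩⟩, rfl⟩

theorem Bisim.symm' {p q : Proc A} (h : Bisim p q) : Bisim q p := by
  obtain ⟨R, hR, hpq⟩ := h
  exact ⟨R, hR, hR.1 hpq⟩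

theorem Bisim.step {p q : Proc A} (h : Bisim p q) {a : A} {p' : Proc A}
    (hs : Step p a p') : ∃ q', Step q a q' ∧ Bisim p' q' := by
  obtain ⟨R, hR, hpq⟩ := h
  obtain ⟨q', h1, h2⟩ := hR.2 p q hpq a p' hs
  exact ⟨q', h1, R, hR, h2⟩

theorem Bisim.trans' {p q r : Proc A} (h1 : Bisim p q) (h2 : Bisim q r) :
    Bisim p r := by
  refine ⟨fun u v => (∃ w, Bisim u w ∧ Bisim w v),
    ⟨?_, ?_⟩, q, h1, h2⟩
  · rintro u v ⟨w, hu, hv⟩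
    exact ⟨w, hv.symm', hu.symm'⟩
  · rintro u v ⟨w, hu, hv⟩ a u' hs
    obtain ⟨w', hws, hw⟩ := hu.step hs
    obtain ⟨v', hvs, hv'⟩ := hv.step hws
    exact ⟨v', hvs, w', hw, hv'⟩

/-- Bisimulation up to bisimilarity. -/
theorem bisim_upto {S : Proc A → Proc A → Prop} (hsym : Symmetric S)
    (hp : ∀ p q, S p q → ∀ a p', Step p a p' → ∃ q', Step q a q' ∧
      ∃ p'' q'', Bisim p' p'' ∧ S p'' q'' ∧ Bisim q'' q')
    {p q : Proc A} (h : S p q) : Bisim p q := by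
  refine ⟨fun u v => ∃ x y, Bisim u x ∧ S x y ∧ Bisim y v, ⟨?_, ?_⟩,
    p, q, bisim_refl p, h, bisim_refl q⟩
  · rintro u v ⟨x, y, h1, h2, h3⟩
    exact ⟨y, x, h3.symm', hsym h2, h1.symm'⟩
  · rintro u v ⟨x, y, h1, h2, h3⟩ a u' hu
    obtain ⟨x', hxs, hx⟩ := h1.step hu
    obtain ⟨y', hys, x'', y'', hx'', hS, hy''⟩ := hp x y h2 a x' hxs
    obtain ⟨v', hvs, hv⟩ := h3.step hys
    exact ⟨v', hvs, x'', y'', hx.trans' hx'', hS, hy''.trans' hv⟩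

theorem bcong {p p' q q' : Proc A} (hp : Bisim p p') (hq : Bisim q q') :
    Bisim (par p q) (par p' q') := by
  refine bisim_upto (S := fun u v => ∃ x x' y y',
      u = par x y ∧ v = par x' y' ∧ Bisim x x' ∧ Bisim y y') ?_ ?_
    ⟨p, p', q, q', rfl, rfl, hp, hq⟩
  · rintro u v ⟨x, x', y, y', rfl, rfl, h1, h2⟩
    exact ⟨x', x, y', y, rfl, rfl, h1.symm', h2.symm'⟩
  · rintro u v ⟨x, x', y, y', rfl, rfl, h1, h2⟩ a u' hu
    cases hu with
    | parL q hs =>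
      obtain ⟨w, hws, hw⟩ := h1.step hs
      exact ⟨par w y', Step.parL _ hws, _, _, bisim_refl _,
        ⟨_, _, _, _, rfl, rfl, hw, h2⟩, bisim_refl _⟩
    | parR p hs =>
      obtain ⟨w, hws, hw⟩ := h2.step hs
      exact ⟨par x' w, Step.parR _ hws, _, _, bisim_refl _,
        ⟨_, _, _, _, rfl, rfl, h1, hw⟩, bisim_refl _⟩

theorem bcomm (p q : Proc A) : Bisim (par p q) (par q p) := by
  refine bisim_upto (S := fun u v => ∃ x y, u = par x y ∧ v = par y x) ?_ ?_
    ⟨p, q, rfl, rfl⟩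
  · rintro u v ⟨x, y, rfl, rfl⟩; exact ⟨y, x, rfl, rfl⟩
  · rintro u v ⟨x, y, rfl, rfl⟩ a u' hu
    cases hu with
    | parL q hs => exact ⟨_, Step.parR _ hs, _, _, bisim_refl _,
        ⟨_, _, rfl, rfl⟩, bisim_refl _⟩
    | parR p hs => exact ⟨_, Step.parL _ hs, _, _, bisim_refl _,
        ⟨_, _, rfl, rfl⟩, bisim_refl _⟩

theorem bassoc (p q r : Proc A) :
    Bisim (par (par p q) r) (par p (par q r)) := by
  refine bisim_upto (S := fun u v =>
      (∃ x y z, u = par (par x y) z ∧ v = par x (par y z)) ∨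
      (∃ x y z, v = par (par x y) z ∧ u = par x (par y z))) ?_ ?_
    (Or.inl ⟨p, q, r, rfl, rfl⟩)
  · rintro u v (⟨x, y, z, rfl, rfl⟩ | ⟨x, y, z, rfl, rfl⟩)
    · exact Or.inr ⟨x, y, z, rfl, rfl⟩
    · exact Or.inl ⟨x, y, z, rfl, rfl⟩
  · rintro u v (⟨x, y, z, rfl, rfl⟩ | ⟨x, y, z, rfl, rfl⟩) a u' hu
    · cases hu with
      | parL q hs =>
        cases hs with
        | parL q hs => exact ⟨_, Step.parL _ hs, _, _, bisim_refl _,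
            Or.inl ⟨_, _, _, rfl, rfl⟩, bisim_refl _⟩
        | parR p hs => exact ⟨_, Step.parR _ (Step.parL _ hs), _, _,
            bisim_refl _, Or.inl ⟨_, _, _, rfl, rfl⟩, bisim_refl _⟩
      | parR p hs => exact ⟨_, Step.parR _ (Step.parR _ hs), _, _,
          bisim_refl _, Or.inl ⟨_, _, _, rfl, rfl⟩, bisim_refl _⟩
    · cases hu with
      | parL q hs => exact ⟨_, Step.parL _ (Step.parL _ hs), _, _,
          bisim_refl _, Or.inr ⟨_, _, _, rfl, rfl⟩, bisim_refl _⟩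
      | parR p hs =>
        cases hs with
        | parL q hs => exact ⟨_, Step.parL _ (Step.parR _ hs), _, _,
            bisim_refl _, Or.inr ⟨_, _, _, rfl, rfl⟩, bisim_refl _⟩
        | parR p hs => exact ⟨_, Step.parR _ hs, _, _,
            bisim_refl _, Or.inr ⟨_, _, _, rfl, rfl⟩, bisim_refl _⟩

theorem bnil (p : Proc A) : Bisim (par p nil) p := by
  refine bisim_upto (S := fun u v => (u = par v nil) ∨ (v = par u nil)) ?_ ?_
    (Or.inl rfl)
  · rintro u v (rfl | rfl)
    · exact Or.inr rfl
    · exact Or.inl rfl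
  · rintro u v (rfl | rfl) a u' hu
    · cases hu with
      | parL q hs => exact ⟨_, hs, _, _, bisim_refl _, Or.inl rfl, bisim_refl _⟩
      | parR p hs => cases hs
    · exact ⟨_, Step.parL _ hu, _, _, bisim_refl _, Or.inr rfl, bisim_refl _⟩

theorem bassoc' (p q r : Proc A) :
    Bisim (par p (par q r)) (par (par p q) r) := (bassoc p q r).symm'

theorem bswap (p q r : Proc A) :
    Bisim (par p (par q r)) (par q (par p r)) :=
  (bassoc' p q r).trans' ((bcong (bcomm p q) (bisim_refl r)).trans' (bassoc q p r))

theorem bswapR (p q r : Proc A) :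
    Bisim (par (par p q) r) (par (par p r) q) :=
  (bassoc p q r).trans' ((bcong (bisim_refl p) (bcomm q r)).trans' (bassoc' p r q))

theorem binter (p q r s : Proc A) :
    Bisim (par (par p q) (par r s)) (par (par p r) (par q s)) :=
  (bassoc p q (par r s)).trans'
    ((bcong (bisim_refl p) (bswap q r s)).trans' (bassoc' p r (par q s)))

/-- `!a.p ~ !a.p | !a.p`. -/
theorem repl_sq (a : A) (p : Proc A) :
    Bisim (repl a p) (par (repl a p) (repl a p)) := by
  have c1 : ∀ r q P : Proc A, Bisim (par (par (par r q) r) P)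
      (par (par r r) (par q P)) := fun r q P =>
    (bcong (bswapR r q r) (bisim_refl P)).trans' (bassoc (par r r) q P)
  have c2 : ∀ r q P : Proc A, Bisim (par (par r (par r q)) P)
      (par (par r r) (par q P)) := fun r q P =>
    (bcong (bassoc' r r q) (bisim_refl P)).trans' (bassoc (par r r) q P)
  have key : Bisim (par (repl a p) nil)
      (par (par (repl a p) (repl a p)) nil) := by
    refine bisim_upto (S := fun u v =>
        (∃ P, u = par (repl a p) P ∧ v = par (par (repl a p) (repl a p)) P) ∨
        (∃ P, u = par (par (repl a p) (repl a p)) P ∧ v = par (repl a p) P))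
      ?_ ?_ (Or.inl ⟨nil, rfl, rfl⟩)
    · rintro u v (⟨P, rfl, rfl⟩ | ⟨P, rfl, rfl⟩)
      · exact Or.inr ⟨P, rfl, rfl⟩
      · exact Or.inl ⟨P, rfl, rfl⟩
    · rintro u v (⟨P, rfl, rfl⟩ | ⟨P, rfl, rfl⟩) b u' hu
      · cases hu with
        | parL q hs =>
          cases hs
          exact ⟨_, Step.parL _ (Step.parL _ Step.repl), _, _,
            bassoc (repl a p) p P, Or.inl ⟨par p P, rfl, rfl⟩,
            (c1 (repl a p) p P).symm'⟩
        | parR p hs =>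
          exact ⟨_, Step.parR _ hs, _, _, bisim_refl _,
            Or.inl ⟨_, rfl, rfl⟩, bisim_refl _⟩
      · cases hu with
        | parL q hs =>
          cases hs with
          | parL q hs2 =>
            cases hs2
            exact ⟨_, Step.parL _ Step.repl, _, _,
              c1 (repl a p) p P, Or.inr ⟨par p P, rfl, rfl⟩,
              (bassoc (repl a p) p P).symm'⟩
          | parR p hs2 =>
            cases hs2
            exact ⟨_, Step.parL _ Step.repl, _, _,
              c2 (repl a p) p P, Or.inr ⟨par p P, rfl, rfl⟩,
              (bassoc (repl a p) p P).symm'⟩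
        | parR p hs =>
          exact ⟨_, Step.parR _ hs, _, _, bisim_refl _,
            Or.inr ⟨_, rfl, rfl⟩, bisim_refl _⟩
  exact ((bnil (repl a p)).symm').trans'
    (key.trans' (bnil (par (repl a p) (repl a p))))

/-- `!F ~ !F | !F`. -/
theorem bang_sq : ∀ F : Proc A, Bisim (bang F) (par (bang F) (bang F))
  | Proc.nil => (bnil nil).symm'
  | Proc.pre a p => repl_sq a p
  | Proc.repl a p => repl_sq a p
  | Proc.par p q =>
    (bcong (bang_sq p) (bang_sq q)).trans'
      (binter (bang p) (bang p) (bang q) (bang q))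

/-- Every derivative of `!F` is bisimilar to `!F | G` for some `G`. -/
theorem bang_step : ∀ (F : Proc A) {b : A} {Z : Proc A},
    Step (bang F) b Z → ∃ G, Bisim Z (par (bang F) G) := by
  intro F
  induction F with
  | nil => intro b Z h; cases h
  | pre a p _ => intro b Z h; cases h; exact ⟨p, bisim_refl _⟩
  | repl a p _ => intro b Z h; cases h; exact ⟨p, bisim_refl _⟩
  | par p q ihp ihq =>
    intro b Z h
    cases h with
    | parL q' hs =>
      obtain ⟨G, hG⟩ := ihp hs
      exact ⟨G, (bcong hG (bisim_refl _)).trans'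
        (bswapR (bang p) G (bang q))⟩
    | parR p' hs =>
      obtain ⟨G, hG⟩ := ihq hs
      exact ⟨G, (bcong (bisim_refl _) hG).trans'
        (bassoc' (bang p) (bang q) G)⟩

/-- Absorption: if `A` regenerates itself after steps, and `A ~ A|(X|Y)`,
then `A ~ A|X`. -/
theorem absorb (Ab X Y : Proc A)
    (hstep : ∀ {b : A} {Z : Proc A}, Step Ab b Z → ∃ G, Bisim Z (par Ab G))
    (hAXY : Bisim Ab (par Ab (par X Y))) :
    Bisim Ab (par Ab X) := by
  have hAXY' := hAXY.symm'
  have key : Bisim (par Ab nil) (par (par Ab nil) X) := by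
    refine bisim_upto (S := fun u v =>
        (∃ W, u = par Ab W ∧ v = par (par Ab W) X) ∨
        (∃ W, u = par (par Ab W) X ∧ v = par Ab W) ∨
        (∃ W G, u = par (par (par Ab W) Y) G ∧ v = par (par Ab W) G) ∨
        (∃ W G, u = par (par Ab W) G ∧ v = par (par (par Ab W) Y) G)) ?_ ?_
      (Or.inl ⟨nil, rfl, rfl⟩)
    · rintro u v (⟨W, rfl, rfl⟩ | ⟨W, rfl, rfl⟩ | ⟨W, G, rfl, rfl⟩ |
        ⟨W, G, rfl, rfl⟩)
      · exact Or.inr (Or.inl ⟨W, rfl, rfl⟩)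
      · exact Or.inl ⟨W, rfl, rfl⟩
      · exact Or.inr (Or.inr (Or.inr ⟨W, G, rfl, rfl⟩))
      · exact Or.inr (Or.inr (Or.inl ⟨W, G, rfl, rfl⟩))
    · rintro u v (⟨W, rfl, rfl⟩ | ⟨W, rfl, rfl⟩ | ⟨W, G, rfl, rfl⟩ |
        ⟨W, G, rfl, rfl⟩) b u' hu
      -- Case 1 : u = Ab | W, v = (Ab | W) | X
      · cases hu with
        | parL q hs =>
          obtain ⟨G, hG⟩ := hstep hs
          have e1 : Bisim (par _ W) (par Ab (par G W)) :=
            (bcong hG (bisim_refl W)).trans' (bassoc Ab G W)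
          exact ⟨_, Step.parL _ (Step.parL _ hs), _, _, e1,
            Or.inl ⟨par G W, rfl, rfl⟩, (bcong e1 (bisim_refl X)).symm'⟩
        | parR p hs =>
          exact ⟨_, Step.parL _ (Step.parR _ hs), _, _, bisim_refl _,
            Or.inl ⟨_, rfl, rfl⟩, bisim_refl _⟩
      -- Case 2 : u = (Ab | W) | X, v = Ab | W
      · cases hu with
        | parL q hs2 =>
          cases hs2 with
          | parL q hs =>
            obtain ⟨G, hG⟩ := hstep hs
            have e1 : Bisim (par _ W) (par Ab (par G W)) :=
              (bcong hG (bisim_refl W)).trans' (bassoc Ab G W)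
            exact ⟨_, Step.parL _ hs, _, _, bcong e1 (bisim_refl X),
              Or.inr (Or.inl ⟨par G W, rfl, rfl⟩), e1.symm'⟩
          | parR p hs =>
            exact ⟨_, Step.parR _ hs, _, _, bisim_refl _,
              Or.inr (Or.inl ⟨_, rfl, rfl⟩), bisim_refl _⟩
        | parR p hs =>
          -- X does a step; Ab must answer via hAXY'
          rename_i X'
          obtain ⟨A2, hA2s, hA2⟩ :=
            hAXY'.step (Step.parR (q' := par X' Y) Ab (Step.parL Y hs))
          refine ⟨_, Step.parL _ hA2s, _, _, bisim_refl _,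
            Or.inr (Or.inr (Or.inr ⟨W, X', rfl, rfl⟩)), ?_⟩
          -- need : ((Ab|W)|Y)|X' ~ A2|W
          have sh : Bisim (par (par (par Ab W) Y) X')
              (par (par Ab (par X' Y)) W) :=
            (bassoc (par Ab W) Y X').trans' ((bassoc Ab W (par Y X')).trans'
              ((bcong (bisim_refl Ab)
                ((bcong (bisim_refl W) (bcomm Y X')).trans'
                  (bcomm W (par X' Y)))).trans' (bassoc' Ab (par X' Y) W)))
          exact sh.trans' (bcong hA2 (bisim_refl W))
      -- Case 3 : u = ((Ab | W) | Y) | G, v = (Ab | W) | G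
      · cases hu with
        | parL q hs2 =>
          cases hs2 with
          | parL q hs3 =>
            cases hs3 with
            | parL q hs =>
              obtain ⟨G2, hG2⟩ := hstep hs
              have e1 : Bisim (par _ W) (par Ab (par G2 W)) :=
                (bcong hG2 (bisim_refl W)).trans' (bassoc Ab G2 W)
              exact ⟨_, Step.parL _ (Step.parL _ hs), _, _,
                bcong (bcong e1 (bisim_refl Y)) (bisim_refl G),
                Or.inr (Or.inr (Or.inl ⟨par G2 W, G, rfl, rfl⟩)),
                (bcong e1 (bisim_refl G)).symm'⟩
            | parR p hs =>
              exact ⟨_, Step.parL _ (Step.parR _ hs), _, _, bisim_refl _,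
                Or.inr (Or.inr (Or.inl ⟨_, G, rfl, rfl⟩)), bisim_refl _⟩
          | parR p hs =>
            -- Y does a step
            rename_i Y'
            obtain ⟨A2, hA2s, hA2⟩ :=
              hAXY'.step (Step.parR (q' := par X Y') Ab (Step.parR X hs))
            refine ⟨_, Step.parL _ (Step.parL _ hA2s), _, _, ?_,
              Or.inl ⟨par W (par Y' G), rfl, rfl⟩, ?_⟩
            · exact (bassoc (par Ab W) Y' G).trans' (bassoc Ab W (par Y' G))
            · -- (Ab | (W | (Y'|G))) | X  ~  (A2 | W) | G
              refine ((bassoc Ab (par W (par Y' G)) X).trans'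
                ((bcong (bisim_refl Ab) (bcomm (par W (par Y' G)) X)).trans'
                  ((bcong (bisim_refl Ab)
                    (bcong (bisim_refl X) (bswap W Y' G))).trans' ?_)))
              refine ((bcong (bisim_refl Ab)
                  (bassoc' X Y' (par W G))).trans' ?_)
              exact (bassoc' Ab (par X Y') (par W G)).trans'
                ((bcong hA2 (bisim_refl (par W G))).trans'
                  (bassoc' A2 W G))
        | parR p hs =>
          exact ⟨_, Step.parR _ hs, _, _, bisim_refl _,
            Or.inr (Or.inr (Or.inl ⟨W, _, rfl, rfl⟩)), bisim_refl _⟩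
      -- Case 4 : u = (Ab | W) | G, v = ((Ab | W) | Y) | G
      · cases hu with
        | parL q hs2 =>
          cases hs2 with
          | parL q hs =>
            obtain ⟨G2, hG2⟩ := hstep hs
            have e1 : Bisim (par _ W) (par Ab (par G2 W)) :=
              (bcong hG2 (bisim_refl W)).trans' (bassoc Ab G2 W)
            exact ⟨_, Step.parL _ (Step.parL _ (Step.parL _ hs)), _, _,
              bcong e1 (bisim_refl G),
              Or.inr (Or.inr (Or.inr ⟨par G2 W, G, rfl, rfl⟩)),
              (bcong (bcong e1 (bisim_refl Y)) (bisim_refl G)).symm'⟩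
          | parR p hs =>
            exact ⟨_, Step.parL _ (Step.parL _ (Step.parR _ hs)), _, _,
              bisim_refl _,
              Or.inr (Or.inr (Or.inr ⟨_, G, rfl, rfl⟩)), bisim_refl _⟩
        | parR p hs =>
          exact ⟨_, Step.parR _ hs, _, _, bisim_refl _,
            Or.inr (Or.inr (Or.inr ⟨W, _, rfl, rfl⟩)), bisim_refl _⟩
  exact ((bnil Ab).symm').trans'
    (key.trans' (bcong (bnil Ab) (bisim_refl X)))

end Aux

end CCS

/-- If `!F ~ α.F' | Q`, then `!F ~ !F | α.F'`. -/
theorem bisim_bang_par_pre {A : Type} [Countable A]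
    (F F' Q : CCS.Proc A) (a : A)
    (hF : F.IsFin) (hF' : F'.IsFin) (hQ : Q.Wf)
    (h : CCS.Bisim F.bang (CCS.Proc.par (CCS.Proc.pre a F') Q)) :
    CCS.Bisim F.bang (CCS.Proc.par F.bang (CCS.Proc.pre a F')) := by
  have hAA := CCS.bang_sq F
  have hAXY : CCS.Bisim F.bang
      (CCS.Proc.par F.bang (CCS.Proc.par (CCS.Proc.pre a F') Q)) :=
    hAA.trans' (CCS.bcong (CCS.bisim_refl _) h)
  exact CCS.absorb F.bang (CCS.Proc.pre a F') Q
    (fun hs => CCS.bang_step F hs) hAXY
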